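/- Define ψ(r,ζ) = −(‖r‖³(rᵀζ)/4)·tanh(‖r‖³(rᵀζ)/ε₁) + √(‖r‖⁶Φ₁(r,ζ)² + ε₂) with ε₁, ε₂ > 0. Then for all r ∈ ℝ³\{0} and f* ∈ ℝ³, ψ(r, f*/‖r‖⁴) > ‖c₁(r,f*)‖², i.e., ψ strictly dominates the squared magnitude of the allocated amplitude. (Proof sketch: ψ(r, f*/‖r‖⁴) ≥ −|rᵀf*|/(4‖r‖) + Φ₁(r,f*)/‖r‖, which exceeds ‖c₁(r,f*)‖² in both cases rᵀf* ≠ 0 and rᵀf* = 0.) -/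

import Mathlib

open Matrix

noncomputable section

def norm3 (r : Fin 3 → ℝ) : ℝ := Real.sqrt (r ⬝ᵥ r)

def Phi1 (r f : Fin 3 → ℝ) : ℝ :=
  Real.sqrt (norm3 (crossProduct r f) ^ 2 + norm3 r ^ 2 * norm3 f ^ 2)

def Phi2 (r f : Fin 3 → ℝ) : ℝ := (2 - Real.sign (r ⬝ᵥ f) ^ 2) * Phi1 r f

def aX (r f : Fin 3 → ℝ) : ℝ :=
  -(Real.sign (r ⬝ᵥ f) / 2) * Real.sqrt ((|r ⬝ᵥ f| + Phi1 r f) / norm3 r)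

def aY (r f : Fin 3 → ℝ) : ℝ :=
  (1 / Real.sqrt 2) * Real.sqrt ((-|r ⬝ᵥ f| + Phi2 r f) / norm3 r)

def bX (r f : Fin 3 → ℝ) : ℝ :=
  (1 / 2) * Real.sqrt ((|r ⬝ᵥ f| + Phi2 r f) / norm3 r)

def bY (r f : Fin 3 → ℝ) : ℝ :=
  -(Real.sign (r ⬝ᵥ f) / Real.sqrt 2) * Real.sqrt ((-|r ⬝ᵥ f| + Phi1 r f) / norm3 r)

open Classical in
def Rmat (r f : Fin 3 → ℝ) : Matrix (Fin 3) (Fin 3) ℝ :=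
  if crossProduct r f ≠ 0 then
    Matrix.of ![ (1 / norm3 r) • r,
      (1 / (norm3 r * norm3 (crossProduct r f))) • ((r ⬝ᵥ r) • f - (r ⬝ᵥ f) • r),
      (1 / norm3 (crossProduct r f)) • (crossProduct r f) ]
  else
    Matrix.of ![ (1 / norm3 r) • r, 0, 0 ]

def c1 (r f : Fin 3 → ℝ) : Fin 3 → ℝ := (Rmat r f)ᵀ.mulVec ![aX r f, aY r f, 0]

def c2 (r f : Fin 3 → ℝ) : Fin 3 → ℝ := (Rmat r f)ᵀ.mulVec ![bX r f, bY r f, 0]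

def f3 (r u v : Fin 3 → ℝ) : Fin 3 → ℝ :=
  ((v ⬝ᵥ r) / norm3 r) • u + ((u ⬝ᵥ r) / norm3 r) • v + ((u ⬝ᵥ v) / norm3 r) • r
    - (5 * (u ⬝ᵥ r) * (v ⬝ᵥ r) / norm3 r ^ 3) • r

end

noncomputable def psi (ε₁ ε₂ : ℝ) (r ζ : Fin 3 → ℝ) : ℝ :=
  -(norm3 r ^ 3 * (r ⬝ᵥ ζ) / 4) * Real.tanh (norm3 r ^ 3 * (r ⬝ᵥ ζ) / ε₁) +
    Real.sqrt (norm3 r ^ 6 * Phi1 r ζ ^ 2 + ε₂)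


/-! With `d = r ⬝ᵥ f`, `P = Φ₁(r, f)` and `n = ‖r‖`, the substitution `ζ = f / n⁴` turns `ψ` into
`-(d/(4n)) tanh(d/(n ε₁)) + √((P/n)² + ε₂)`, which is strictly larger than `P/n - |d|/(4n)` because
`|tanh| ≤ 1` and `ε₂ > 0`. On the other side, the first two rows of `Rmat` are orthonormal (the second
one is the Gram–Schmidt normalisation of `f` against `r`, with norm `1` by Lagrange's identity) or
the second one vanishes, so `‖c₁‖² ≤ aX² + aY²`; and `aX² + aY²` equals `(3P - |d|)/(4n)` if `d ≠ 0`
and `P/n` if `d = 0`, both at most `P/n - |d|/(4n)` since `|d| ≤ P`. -/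

lemma dotProduct_self_nonneg {n R : Type*} [Fintype n] [Ring R] [LinearOrder R]
    [IsStrictOrderedRing R] (v : n → R) : 0 ≤ v ⬝ᵥ v :=
  Finset.sum_nonneg fun i _ => mul_self_nonneg (v i)

lemma neg_abs_add_lt_neg_mul_tanh_add_sqrt (x y p ε : ℝ) (hε : 0 < ε) :
    -|x| + p < -x * Real.tanh y + Real.sqrt (p ^ 2 + ε) := by
  have htanh : x * Real.tanh y ≤ |x| :=
    calc x * Real.tanh y ≤ |x| * |Real.tanh y| := by rw [← abs_mul]; exact le_abs_self _
      _ ≤ |x| := mul_le_of_le_one_right (abs_nonneg x) (Real.abs_tanh_lt_one y).le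
  have hsqrt : p < Real.sqrt (p ^ 2 + ε) := Real.lt_sqrt_of_sq_lt (by linarith)
  linarith

section

variable (r f : Fin 3 → ℝ)

lemma norm3_sq : norm3 r ^ 2 = r ⬝ᵥ r := Real.sq_sqrt (dotProduct_self_nonneg r)

lemma norm3_nonneg : 0 ≤ norm3 r := Real.sqrt_nonneg _

variable {r} in
lemma norm3_pos (hr : r ≠ 0) : 0 < norm3 r :=
  Real.sqrt_pos.2 <| (dotProduct_self_nonneg r).lt_of_ne' (dotProduct_self_eq_zero.not.2 hr)

lemma norm3_smul (c : ℝ) : norm3 (c • r) = |c| * norm3 r := by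
  rw [norm3, smul_dotProduct, dotProduct_smul, smul_eq_mul, smul_eq_mul, ← mul_assoc,
    Real.sqrt_mul (mul_self_nonneg c), Real.sqrt_mul_self_eq_abs, norm3]

lemma Phi1_smul (c : ℝ) : Phi1 r (c • f) = |c| * Phi1 r f := by
  simp only [Phi1, map_smul, norm3_smul, mul_pow, sq_abs]
  rw [← Real.sqrt_sq_eq_abs, ← Real.sqrt_mul (sq_nonneg c)]
  ring_nf

lemma abs_dotProduct_le_Phi1 : |r ⬝ᵥ f| ≤ Phi1 r f := by
  refine Real.abs_le_sqrt ?_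
  have hlagrange : norm3 (r ⨯₃ f) ^ 2 = r ⬝ᵥ r * f ⬝ᵥ f - (r ⬝ᵥ f) ^ 2 := by
    rw [norm3_sq, cross_dot_cross, dotProduct_comm f r, sq]
  simp only [norm3_sq] at *
  linarith [dotProduct_self_nonneg (r ⨯₃ f)]

lemma psi_smul_eq (hr : r ≠ 0) (ε₁ ε₂ : ℝ) :
    psi ε₁ ε₂ r ((norm3 r ^ 4)⁻¹ • f) =
      -((r ⬝ᵥ f) / norm3 r / 4) * Real.tanh ((r ⬝ᵥ f) / norm3 r / ε₁) +
        Real.sqrt ((Phi1 r f / norm3 r) ^ 2 + ε₂) := by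
  have hn := norm3_pos hr
  have hdot : norm3 r ^ 3 * (r ⬝ᵥ (norm3 r ^ 4)⁻¹ • f) = (r ⬝ᵥ f) / norm3 r := by
    rw [dotProduct_smul, smul_eq_mul]
    field_simp
  have hPhi1 : norm3 r ^ 6 * Phi1 r ((norm3 r ^ 4)⁻¹ • f) ^ 2 = (Phi1 r f / norm3 r) ^ 2 := by
    rw [Phi1_smul, abs_of_pos (by positivity)]
    field_simp
  rw [psi, hdot, hPhi1, div_right_comm]

lemma sub_lt_psi_smul (hr : r ≠ 0) (ε₁ : ℝ) {ε₂ : ℝ} (hε₂ : 0 < ε₂) :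
    Phi1 r f / norm3 r - |r ⬝ᵥ f| / (4 * norm3 r) < psi ε₁ ε₂ r ((norm3 r ^ 4)⁻¹ • f) := by
  have hn := norm3_pos hr
  have habs : |(r ⬝ᵥ f) / norm3 r / 4| = |r ⬝ᵥ f| / (4 * norm3 r) := by
    rw [abs_div, abs_div, abs_of_pos hn, abs_of_pos (four_pos : (0 : ℝ) < 4), div_div, mul_comm]
  rw [psi_smul_eq r f hr, sub_eq_neg_add, ← habs]
  exact neg_abs_add_lt_neg_mul_tanh_add_sqrt _ _ _ _ hε₂

lemma sign_sq_le_one (x : ℝ) : Real.sign x ^ 2 ≤ 1 := by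
  rcases Real.sign_apply_eq x with h | h | h <;> norm_num [h]

lemma aX_sq : aX r f ^ 2 = Real.sign (r ⬝ᵥ f) ^ 2 / 4 * ((|r ⬝ᵥ f| + Phi1 r f) / norm3 r) := by
  have hd := abs_dotProduct_le_Phi1 r f
  rw [aX, mul_pow, neg_sq, div_pow,
    Real.sq_sqrt (div_nonneg (by linarith [abs_nonneg (r ⬝ᵥ f)]) (norm3_nonneg r))]
  norm_num

lemma aY_sq : aY r f ^ 2 = (-|r ⬝ᵥ f| + Phi2 r f) / norm3 r / 2 := by
  have hd := abs_dotProduct_le_Phi1 r f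
  have hs := sign_sq_le_one (r ⬝ᵥ f)
  have hP : 0 ≤ -|r ⬝ᵥ f| + Phi2 r f := by
    rw [Phi2]; nlinarith [abs_nonneg (r ⬝ᵥ f)]
  rw [aY, mul_pow, div_pow, Real.sq_sqrt (div_nonneg hP (norm3_nonneg r)),
    Real.sq_sqrt zero_le_two]
  ring

lemma aX_sq_add_aY_sq_le :
    aX r f ^ 2 + aY r f ^ 2 ≤ Phi1 r f / norm3 r - |r ⬝ᵥ f| / (4 * norm3 r) := by
  have hd := abs_dotProduct_le_Phi1 r f
  rw [aX_sq, aY_sq, Phi2]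
  rcases eq_or_ne (r ⬝ᵥ f) 0 with h0 | h0
  · simp only [h0, Real.sign_zero, abs_zero]
    apply le_of_eq
    ring
  · have hs : Real.sign (r ⬝ᵥ f) ^ 2 = 1 := by
      rcases Real.sign_apply_eq_of_ne_zero _ h0 with h | h <;> norm_num [h]
    have hslack : 1 / 4 * ((|r ⬝ᵥ f| + Phi1 r f) / norm3 r) + (-|r ⬝ᵥ f| + (2 - 1) * Phi1 r f)
        / norm3 r / 2 = Phi1 r f / norm3 r - |r ⬝ᵥ f| / (4 * norm3 r) - Phi1 r f / norm3 r / 4 := by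
      ring
    have : 0 ≤ Phi1 r f / norm3 r := div_nonneg ((abs_nonneg _).trans hd) (norm3_nonneg r)
    rw [hs, hslack]
    linarith

lemma exists_Rmat_eq_orthogonal_rows (hr : r ≠ 0) : ∃ u₁ u₂ : Fin 3 → ℝ,
    Rmat r f = of ![(1 / norm3 r) • r, u₁, u₂] ∧ r ⬝ᵥ u₁ = 0 ∧ u₁ ⬝ᵥ u₁ ≤ 1 := by
  unfold Rmat
  split_ifs with hx
  · refine ⟨_, _, rfl, ?_, le_of_eq ?_⟩
    · rw [dotProduct_smul, dotProduct_sub, dotProduct_smul, dotProduct_smul, smul_eq_mul,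
        smul_eq_mul, smul_eq_mul, mul_comm (r ⬝ᵥ r), sub_self, mul_zero]
    · have hn := norm3_pos hr
      have hm := norm3_pos hx
      have hw : ((r ⬝ᵥ r) • f - (r ⬝ᵥ f) • r) ⬝ᵥ ((r ⬝ᵥ r) • f - (r ⬝ᵥ f) • r) =
          norm3 r ^ 2 * norm3 (r ⨯₃ f) ^ 2 := by
        simp only [norm3_sq, cross_dot_cross, sub_dotProduct, dotProduct_sub, smul_dotProduct,
          dotProduct_smul, smul_eq_mul, dotProduct_comm f r]
        ring
      rw [smul_dotProduct, dotProduct_smul, hw, smul_eq_mul, smul_eq_mul]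
      field_simp
  · exact ⟨0, 0, rfl, dotProduct_zero r, by simp⟩

lemma of_transpose_mulVec_dotProduct_self (u₀ u₁ u₂ : Fin 3 → ℝ) (a b : ℝ) :
    (of ![u₀, u₁, u₂])ᵀ *ᵥ ![a, b, 0] ⬝ᵥ (of ![u₀, u₁, u₂])ᵀ *ᵥ ![a, b, 0] =
      a ^ 2 * (u₀ ⬝ᵥ u₀) + 2 * a * b * (u₀ ⬝ᵥ u₁) + b ^ 2 * (u₁ ⬝ᵥ u₁) := by
  simp only [dotProduct, mulVec, transpose_apply, of_apply, cons_val', cons_val_fin_one,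
    Fin.sum_univ_three, cons_val_zero, cons_val_one, cons_val, mul_zero, add_zero]
  ring

lemma norm3_c1_sq_le (hr : r ≠ 0) : norm3 (c1 r f) ^ 2 ≤ aX r f ^ 2 + aY r f ^ 2 := by
  obtain ⟨u₁, u₂, hR, horth, hunit⟩ := exists_Rmat_eq_orthogonal_rows r f hr
  have hr1 : ((1 / norm3 r) • r) ⬝ᵥ ((1 / norm3 r) • r) = 1 := by
    have := norm3_pos hr
    rw [smul_dotProduct, dotProduct_smul, ← norm3_sq, smul_eq_mul, smul_eq_mul]
    field_simp
  rw [norm3_sq, c1, hR, of_transpose_mulVec_dotProduct_self, hr1, smul_dotProduct, horth,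
    smul_zero, mul_zero, mul_one, add_zero]
  gcongr
  exact mul_le_of_le_one_right (sq_nonneg _) hunit

end

theorem psi_dominates_general (ε₁ ε₂ : ℝ) (hε₂ : 0 < ε₂)
    (r f : Fin 3 → ℝ) (hr : r ≠ 0) :
    psi ε₁ ε₂ r ((norm3 r ^ 4)⁻¹ • f) > norm3 (c1 r f) ^ 2 :=
  calc norm3 (c1 r f) ^ 2 ≤ aX r f ^ 2 + aY r f ^ 2 := norm3_c1_sq_le r f hr
    _ ≤ Phi1 r f / norm3 r - |r ⬝ᵥ f| / (4 * norm3 r) := aX_sq_add_aY_sq_le r f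
    _ < psi ε₁ ε₂ r ((norm3 r ^ 4)⁻¹ • f) := sub_lt_psi_smul r f hr ε₁ hε₂

theorem psi_dominates (ε₁ ε₂ : ℝ) (hε₁ : 0 < ε₁) (hε₂ : 0 < ε₂)
    (r f : Fin 3 → ℝ) (hr : r ≠ 0) :
    psi ε₁ ε₂ r ((norm3 r ^ 4)⁻¹ • f) > norm3 (c1 r f) ^ 2 :=
  psi_dominates_general ε₁ ε₂ hε₂ r f hr
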